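/- arXiv:0906.4431 — 3 statements merged into one kernel-verified Lean document; each statement's English description precedes it below -/
import Mathlib

section
/- Let G be a disjoint union of directed paths and let S be any schedule of q jobs respecting the precedence constraints of G. Then there exists a schedule S' of the same q jobs (hence of the same cost) respecting the precedence constraints of G in which, for each path, all scheduled jobs from that path appear contiguously. -/
/-!
Stably sort the schedule by path index. Sorting makes the jobs of each path contiguous, and
stability keeps the relative order of any two jobs on the same path, which is all that the
precedence constraints of disjoint paths compare.
-/

/-- A job is a pair (path index, position on that path). -/
abbrev Job := ℕ × ℕ

/-- `IsSchedule z p L` : `L` is an injective sequence of valid jobs of the disjoint-paths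
instance with `z` paths where path `i` has `p i` jobs, respecting the precedence
constraints: a non-initial job occurs only after its predecessor on its path. -/
def IsSchedule (z : ℕ) (p : ℕ → ℕ) (L : List Job) : Prop :=
  L.Nodup ∧ (∀ j ∈ L, j.1 < z ∧ j.2 < p j.1) ∧
  ∀ i ℓ : ℕ, (i, ℓ + 1) ∈ L → (i, ℓ) ∈ L ∧ L.idxOf (i, ℓ) < L.idxOf (i, ℓ + 1)

namespace List

variable {α : Type*}

section idxOf

variable [BEq α] [LawfulBEq α] {a b : α} {l : List α}

theorem Nodup.idxOf_lt_idxOf_of_pair_sublist (hl : l.Nodup) (h : [a, b] <+ l) :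
    l.idxOf a < l.idxOf b := by
  induction l with
  | nil => simp at h
  | cons x t ih =>
    have hx : x ∉ t := (nodup_cons.mp hl).1
    cases h with
    | cons _ h =>
      have ha : x ≠ a := fun h' => hx (h' ▸ h.subset (by simp))
      have hb : x ≠ b := fun h' => hx (h' ▸ h.subset (by simp))
      simp [idxOf_cons, beq_false_of_ne ha, beq_false_of_ne hb, ih hl.of_cons h]
    | cons_cons _ h =>
      have hb : a ≠ b := fun h' => hx (h' ▸ h.subset (by simp))
      simp [idxOf_cons, beq_false_of_ne hb]

theorem pair_sublist_of_idxOf_lt_idxOf (hb : b ∈ l) (h : l.idxOf a < l.idxOf b) :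
    [a, b] <+ l := by
  induction l with
  | nil => simp at hb
  | cons x t ih =>
    by_cases hxa : x = a
    · subst hxa
      have hbx : b ≠ x := by rintro rfl; simp at h
      exact (singleton_sublist.mpr ((mem_cons.mp hb).resolve_left hbx)).cons_cons x
    · by_cases hxb : x = b
      · subst hxb; simp at h
      · have hb' : b ∈ t := (mem_cons.mp hb).resolve_left (Ne.symm hxb)
        simp only [idxOf_cons, beq_false_of_ne hxa, beq_false_of_ne hxb, cond_false] at h
        exact (ih hb' (by omega)).cons x

end idxOf

section key

variable {β : Type*} [LinearOrder β] {f : α → β}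

theorem pairwise_mergeSort_key (f : α → β) (l : List α) :
    (l.mergeSort fun a b => f a ≤ f b).Pairwise fun a b => f a ≤ f b := by
  simpa using pairwise_mergeSort (le := fun a b => f a ≤ f b)
    (by simpa using fun _ _ _ => le_trans) (by simpa using fun _ _ => le_total _ _) l

theorem pair_sublist_mergeSort_key {a b : α} {l : List α} (hab : f a ≤ f b) (h : [a, b] <+ l) :
    [a, b] <+ l.mergeSort fun a b => f a ≤ f b :=
  pair_sublist_mergeSort (by simpa using fun _ _ _ => le_trans)
    (by simpa using fun _ _ => le_total _ _) (by simpa using hab) h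

theorem Pairwise.filter_lt_append_filter_eq_append_filter_gt {l : List α}
    (hl : l.Pairwise fun a b => f a ≤ f b) (i : β) :
    l.filter (f · < i) ++ l.filter (f · = i) ++ l.filter (i < f ·) = l := by
  induction l with
  | nil => simp
  | cons x t ih =>
    obtain ⟨hge, ht⟩ := pairwise_cons.mp hl
    rcases lt_trichotomy (f x) i with hxi | rfl | hxi
    · simpa [hxi, hxi.ne, hxi.not_gt] using ih ht
    · have hlt : t.filter (f · < f x) = [] :=
        filter_eq_nil_iff.mpr fun a ha => by simpa using hge a ha
      simpa [hlt] using ih ht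
    · have hlt : t.filter (f · < i) = [] :=
        filter_eq_nil_iff.mpr fun a ha => by simpa using (hxi.trans_le (hge a ha)).le
      have heq : t.filter (f · = i) = [] :=
        filter_eq_nil_iff.mpr fun a ha => by simpa using (hxi.trans_le (hge a ha)).ne'
      simpa [hxi, hxi.ne', hxi.not_gt, hlt, heq] using ih ht

theorem Pairwise.exists_eq_append_fiber_append {l : List α}
    (hl : l.Pairwise fun a b => f a ≤ f b) (i : β) :
    ∃ l₁ l₂ l₃ : List α, l = l₁ ++ l₂ ++ l₃ ∧
      (∀ x ∈ l₂, f x = i) ∧ ∀ x ∈ l₁ ++ l₃, f x ≠ i := by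
  refine ⟨_, _, _, (hl.filter_lt_append_filter_eq_append_filter_gt i).symm, by simp, ?_⟩
  simp only [mem_append, mem_filter, decide_eq_true_eq]
  rintro x (⟨-, hx⟩ | ⟨-, hx⟩)
  exacts [hx.ne, hx.ne']

end key

end List

open List in
theorem IsSchedule.mergeSort_fst {z : ℕ} {p : ℕ → ℕ} {L : List Job} (hL : IsSchedule z p L) :
    IsSchedule z p (L.mergeSort fun a b => a.1 ≤ b.1) := by
  obtain ⟨hnd, hval, hprec⟩ := hL
  have hperm := mergeSort_perm L fun a b => a.1 ≤ b.1
  have hnd' := hperm.nodup_iff.mpr hnd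
  refine ⟨hnd', fun j hj => hval j (hperm.subset hj), fun i ℓ h => ?_⟩
  obtain ⟨hmem, hlt⟩ := hprec i ℓ (hperm.subset h)
  have hpair : [(i, ℓ), (i, ℓ + 1)] <+ L.mergeSort fun a b => a.1 ≤ b.1 :=
    pair_sublist_mergeSort_key le_rfl (pair_sublist_of_idxOf_lt_idxOf (hperm.subset h) hlt)
  exact ⟨hperm.symm.subset hmem, hnd'.idxOf_lt_idxOf_of_pair_sublist hpair⟩

/-- Any precedence-respecting schedule can be reordered into a precedence-respecting
schedule of the same jobs (hence of the same length and cost) in which, for each path,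
all scheduled jobs from that path appear contiguously. -/
theorem schedule_reorder_contiguous (z : ℕ) (p : ℕ → ℕ) (L : List Job)
    (hL : IsSchedule z p L) :
    ∃ L' : List Job, IsSchedule z p L' ∧ L'.Perm L ∧
      ∀ i : ℕ, ∃ l₁ l₂ l₃ : List Job, L' = l₁ ++ l₂ ++ l₃ ∧
        (∀ j ∈ l₂, j.1 = i) ∧ (∀ j ∈ l₁ ++ l₃, j.1 ≠ i) :=
  ⟨_, hL.mergeSort_fst, List.mergeSort_perm _ _,
    (List.pairwise_mergeSort_key Prod.fst L).exists_eq_append_fiber_append⟩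
end

section
/- Let T be the dynamic-programming table defined by: T[{P_1}, k] = Σ_{s=1}^{k} c(J_{1,s}) for k ≤ p(1), T[{P_1}, k] = ∞ for k > p(1), and for ℓ > 1, T[{P_1,...,P_ℓ}, j] = min over 0 ≤ k ≤ min(j, p(ℓ)) of T[{P_1,...,P_{ℓ-1}}, j-k] + Σ_{s=1}^{k} c(J_{ℓ,s}). Then T[{P_1,...,P_ℓ}, j] equals the minimum cost of scheduling j jobs from the jobs on paths P_1, ..., P_ℓ respecting the precedence constraints (and is ∞ if no such schedule exists). -/
open scoped ENat

/-- The dynamic-programming table for Path Schedule: `pathDP p c ℓ j` is the value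
`T[{P_1,…,P_ℓ}, j]` (paths indexed `0,…,ℓ-1`), with values in `ℕ∞`. -/
noncomputable def pathDP (p : ℕ → ℕ) (c : ℕ → ℕ → ℕ) : ℕ → ℕ → ℕ∞
  | 0, j => if j = 0 then 0 else ⊤
  | ℓ + 1, j =>
      ⨅ k ∈ Finset.range (min j (p ℓ) + 1),
        pathDP p c ℓ (j - k) + ∑ s ∈ Finset.range k, (c ℓ s : ℕ∞)

/-! Splitting a feasible choice of prefix lengths for the first `ℓ + 1` paths by the length `m`
of its last prefix writes the feasible costs for `j` jobs as the union over `m` of the feasible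
costs for `ℓ` paths and `j - m` jobs, shifted by the cost of the first `m` jobs of path `ℓ`.
Adding a constant commutes with infima in `ℕ∞`, so the optimum obeys the recurrence of
`pathDP`. -/

open Finset

def scheduleCosts (p : ℕ → ℕ) (c : ℕ → ℕ → ℕ) (ℓ j : ℕ) : Set ℕ∞ :=
  {C : ℕ∞ | ∃ k : ℕ → ℕ, (∀ i, k i ≤ p i) ∧ (∀ i, ℓ ≤ i → k i = 0) ∧
    (∑ i ∈ range ℓ, k i) = j ∧
    C = ∑ i ∈ range ℓ, ∑ s ∈ range (k i), (c i s : ℕ∞)}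

theorem sInf_scheduleCosts_zero (p : ℕ → ℕ) (c : ℕ → ℕ → ℕ) (j : ℕ) :
    sInf (scheduleCosts p c 0 j) = if j = 0 then 0 else ⊤ := by
  split_ifs with hj
  · exact nonpos_iff_eq_zero.mp <| sInf_le ⟨0, by simp, by simp, by simp [hj], by simp⟩
  · exact sInf_eq_top.mpr fun C ⟨_, _, _, hsum, _⟩ => absurd hsum.symm (by simpa using hj)

theorem sum_range_update_self {M : Type*} [AddCommMonoid M] (g : ℕ → ℕ → M) (k : ℕ → ℕ)
    (ℓ b : ℕ) : ∑ i ∈ range ℓ, g i (Function.update k ℓ b i) = ∑ i ∈ range ℓ, g i (k i) :=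
  sum_congr rfl fun i hi => by rw [Function.update_of_ne (mem_range.mp hi).ne]

theorem scheduleCosts_succ (p : ℕ → ℕ) (c : ℕ → ℕ → ℕ) (ℓ j : ℕ) :
    scheduleCosts p c (ℓ + 1) j = ⋃ m ∈ range (min j (p ℓ) + 1),
      (· + ∑ s ∈ range m, (c ℓ s : ℕ∞)) '' scheduleCosts p c ℓ (j - m) := by
  ext C
  simp only [scheduleCosts, Set.mem_iUnion, Set.mem_image, Set.mem_ofPred_eq, mem_range,
    Nat.lt_succ_iff, le_min_iff, sum_range_succ]
  constructor
  · rintro ⟨k, hkp, hk0, rfl, rfl⟩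
    refine ⟨k ℓ, ⟨by omega, hkp ℓ⟩, _, ⟨Function.update k ℓ 0, fun i => ?_, fun i hi => ?_,
      ?_, rfl⟩, ?_⟩
    · rcases eq_or_ne i ℓ with rfl | h <;> simp [*]
    · rcases eq_or_ne i ℓ with rfl | h
      · simp
      · simp [h, hk0 i (by omega)]
    · rw [sum_range_update_self (fun _ x => x)]; omega
    · rw [sum_range_update_self (fun i x => ∑ s ∈ range x, (c i s : ℕ∞))]
  · rintro ⟨m, ⟨hmj, hmp⟩, _, ⟨k, hkp, hk0, hsum, rfl⟩, rfl⟩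
    refine ⟨Function.update k ℓ m, fun i => ?_, fun i hi => ?_, ?_, ?_⟩
    · rcases eq_or_ne i ℓ with rfl | h <;> simp [*]
    · simp [show i ≠ ℓ by omega, hk0 i (by omega)]
    · rw [sum_range_update_self (fun _ x => x), Function.update_self]; omega
    · rw [sum_range_update_self (fun i x => ∑ s ∈ range x, (c i s : ℕ∞)), Function.update_self]

theorem sInf_scheduleCosts_succ (p : ℕ → ℕ) (c : ℕ → ℕ → ℕ) (ℓ j : ℕ) :
    sInf (scheduleCosts p c (ℓ + 1) j) = ⨅ m ∈ range (min j (p ℓ) + 1),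
      sInf (scheduleCosts p c ℓ (j - m)) + ∑ s ∈ range m, (c ℓ s : ℕ∞) := by
  simp_rw [ENat.sInf_add, scheduleCosts_succ, sInf_eq_iInf, iInf_iUnion, iInf_image]

/-- Correctness of the dynamic programming recurrence: `pathDP p c ℓ j` equals the
minimum cost of scheduling `j` jobs from paths `P_1,…,P_ℓ` respecting the precedence
constraints (equivalently, by the prefix property, over choices of prefix lengths
`k i ≤ p i` summing to `j`), and is `⊤` if no such schedule exists. -/
theorem pathDP_correct (p : ℕ → ℕ) (c : ℕ → ℕ → ℕ) (ℓ j : ℕ) :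
    pathDP p c ℓ j =
      sInf {C : ℕ∞ | ∃ k : ℕ → ℕ, (∀ i, k i ≤ p i) ∧ (∀ i, ℓ ≤ i → k i = 0) ∧
        (∑ i ∈ Finset.range ℓ, k i) = j ∧
        C = ∑ i ∈ Finset.range ℓ, ∑ s ∈ Finset.range (k i), (c i s : ℕ∞)} := by
  change pathDP p c ℓ j = sInf (scheduleCosts p c ℓ j)
  induction ℓ generalizing j with
  | zero => rw [pathDP, sInf_scheduleCosts_zero]
  | succ ℓ ih => simp only [pathDP, sInf_scheduleCosts_succ, ih]
end

section
/- In any multiset of voter profiles where at most B voters can be bribed, if more than B voters share the same profile, then removing one of them does not change whether a successful bribery within budget exists. Formally: let f : V → Π be a profile assignment on a finite voter set V, and suppose the success predicate Succ(S) for S ⊆ V with |S| ≤ B depends only on the multiset of profiles {f(v) : v ∈ S}. If v, v' ∈ V are distinct with f(v) = f(v') and some profile class has more than B members, then (∃ S ⊆ V, |S| ≤ B, Succ(S)) ↔ (∃ S ⊆ V \ {v}, |S| ≤ B, Succ(S)). -/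
/-- Kernelization: if the success predicate on sets of at most `B` bribed voters depends
only on the multiset of their profiles, and some voter `v`'s profile class has more than
`B` members (in particular `v` has a twin `v' ≠ v` with the same profile), then deleting
`v` does not change whether a successful set of at most `B` voters exists. -/
theorem profile_kernelization {V Pr : Type*} [Fintype V] [DecidableEq V] [DecidableEq Pr]
    (f : V → Pr) (Succ : Finset V → Prop) (B : ℕ)
    (hInv : ∀ S S' : Finset V, Multiset.map f S.val = Multiset.map f S'.val →
      (Succ S ↔ Succ S'))
    (v v' : V) (hne : v ≠ v') (hff : f v = f v')
    (hbig : B < (Finset.univ.filter (fun u : V => f u = f v)).card) :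
    (∃ S : Finset V, S.card ≤ B ∧ Succ S) ↔
    (∃ S : Finset V, S ⊆ Finset.univ.erase v ∧ S.card ≤ B ∧ Succ S) := by
  constructor
  · rintro ⟨S, hcard, hS⟩
    by_cases hv : v ∈ S
    · -- find u in the class of v not in S
      have hlt : ((Finset.univ.filter (fun u : V => f u = f v)) \ S).card > 0 := by
        have := Finset.le_card_sdiff S (Finset.univ.filter (fun u : V => f u = f v))
        omega
      obtain ⟨u, hu⟩ := Finset.card_pos.mp hlt
      rw [Finset.mem_sdiff, Finset.mem_filter] at hu
      obtain ⟨⟨-, hfu⟩, huS⟩ := hu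
      have huv : u ≠ v := fun h => huS (h ▸ hv)
      refine ⟨insert u (S.erase v), ?_, ?_, ?_⟩
      · intro x hx
        rcases Finset.mem_insert.mp hx with rfl | hx
        · exact Finset.mem_erase.mpr ⟨huv, Finset.mem_univ _⟩
        · exact Finset.mem_erase.mpr ⟨(Finset.mem_erase.mp hx).1, Finset.mem_univ _⟩
      · have : (insert u (S.erase v)).card ≤ (S.erase v).card + 1 :=
          Finset.card_insert_le _ _
        have hc : (S.erase v).card = S.card - 1 := Finset.card_erase_of_mem hv
        have hpos : 1 ≤ S.card := Finset.card_pos.mpr ⟨v, hv⟩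
        omega
      · refine (hInv S (insert u (S.erase v)) ?_).mp hS
        have hnotmem : u ∉ S.erase v := fun h => huS (Finset.mem_of_mem_erase h)
        rw [Finset.insert_val, Multiset.ndinsert_of_notMem hnotmem]
        rw [Finset.erase_val]
        have hvmem : v ∈ S.val := hv
        calc Multiset.map f S.val
            = Multiset.map f (v ::ₘ S.val.erase v) := by
              rw [Multiset.cons_erase hvmem]
          _ = f v ::ₘ Multiset.map f (S.val.erase v) := by rw [Multiset.map_cons]
          _ = Multiset.map f (u ::ₘ S.val.erase v) := by rw [Multiset.map_cons, hfu]
    · exact ⟨S, fun x hx => Finset.mem_erase.mpr ⟨fun h => hv (h ▸ hx), Finset.mem_univ _⟩,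
        hcard, hS⟩
  · rintro ⟨S, -, hcard, hS⟩
    exact ⟨S, hcard, hS⟩
end
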